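/- Let E and F be finite-dimensional real inner product spaces, let B ⊆ E be an open convex set, let λ ≥ 1, and let f : B → F be differentiable with ‖Df_z‖ ≤ λ (operator norm) for every z ∈ B. Then the following are equivalent: (i) there exists K > 0 such that δ(Γ_{Df_z}, Γ_{Df_w}) ≤ K·‖(z, f(z)) − (w, f(w))‖ for all z, w ∈ B (the norm being the Euclidean product norm on E × F); (ii) there exists L > 0 such that ‖Df_z − Df_w‖ ≤ L·‖z − w‖ for all z, w ∈ B. -/

import Mathlib

open Set Filter

/-- The distance `δ(L₁, L₂)`: the Hausdorff distance between `L₁ ∩ 𝕊` and `L₂ ∩ 𝕊`,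
where `𝕊` is the unit sphere. -/
noncomputable def sphereDist {X : Type*} [NormedAddCommGroup X] (S T : Set X) : ℝ :=
  Metric.hausdorffDist (S ∩ Metric.sphere 0 1) (T ∩ Metric.sphere 0 1)

/-- The graph `Γ_A = {(u, A u) : u ∈ E}` of a continuous linear map `A : E → F`, as a
subset of `E × F` equipped with the Euclidean product norm `‖(u,v)‖ = (‖u‖² + ‖v‖²)^(1/2)`. -/
def graphSet {E F : Type*} [NormedAddCommGroup E] [InnerProductSpace ℝ E]
    [NormedAddCommGroup F] [InnerProductSpace ℝ F] (A : E →L[ℝ] F) :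
    Set (WithLp 2 (E × F)) :=
  {p | (WithLp.equiv 2 (E × F) p).2 = A (WithLp.equiv 2 (E × F) p).1}

/-!
For continuous linear maps `A B : E → F` the distance `δ(Γ_A, Γ_B)` and `‖A - B‖` are
comparable: `δ(Γ_A, Γ_B) ≤ 2 ‖A - B‖`, since moving `(u, A u)` to `(u, B u)` and renormalising
costs at most twice `‖(A - B) u‖`; and `‖A - B‖ ≤ (1 + ‖A‖) (1 + ‖B‖) δ(Γ_A, Γ_B)`, since
`(A - B) u = (A u - v) - B (u - w)` for any `(w, v) ∈ Γ_B`. With `‖Df‖ ≤ λ` the constants are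
uniform, and by the mean value inequality `z ↦ (z, f z)` is bi-Lipschitz on `B`:
`‖z - w‖ ≤ ‖(z, f z) - (w, f w)‖ ≤ (1 + λ) ‖z - w‖`.
-/

open WithLp

theorem sphereDist_nonneg {X : Type*} [NormedAddCommGroup X] (S T : Set X) :
    0 ≤ sphereDist S T :=
  Metric.hausdorffDist_nonneg

theorem WithLp.prod_norm_toLp_le_add {E F : Type*} [SeminormedAddCommGroup E]
    [SeminormedAddCommGroup F] (u : E) (v : F) :
    ‖toLp 2 (u, v)‖ ≤ ‖u‖ + ‖v‖ := by
  rw [prod_norm_eq_of_L2]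
  change √(‖u‖ ^ 2 + ‖v‖ ^ 2) ≤ _
  exact Real.sqrt_le_iff.mpr ⟨by positivity, by nlinarith [norm_nonneg u, norm_nonneg v]⟩

theorem dist_inv_norm_smul_le {V : Type*} [NormedAddCommGroup V] [NormedSpace ℝ V]
    {p : V} (hp : ‖p‖ = 1) (r : V) :
    dist p (‖r‖⁻¹ • r) ≤ 2 * dist p r := by
  have hr : ‖r - ‖r‖⁻¹ • r‖ ≤ |‖r‖ - 1| := by
    rcases eq_or_ne r 0 with rfl | hr0
    · simp
    have hpos : 0 < ‖r‖ := norm_pos_iff.mpr hr0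
    apply le_of_eq
    calc ‖r - ‖r‖⁻¹ • r‖ = ‖(1 - ‖r‖⁻¹) • r‖ := by rw [sub_smul, one_smul]
      _ = |1 - ‖r‖⁻¹| * |‖r‖| := by rw [norm_smul, Real.norm_eq_abs, abs_norm]
      _ = |‖r‖ - 1| := by rw [← abs_mul, sub_mul, one_mul, inv_mul_cancel₀ hpos.ne']
  calc dist p (‖r‖⁻¹ • r) ≤ dist p r + ‖r - ‖r‖⁻¹ • r‖ := by
        rw [← dist_eq_norm]; exact dist_triangle _ _ _
    _ ≤ dist p r + dist p r := by
        gcongr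
        rw [dist_comm, dist_eq_norm]
        exact hr.trans (by rw [← hp]; exact abs_norm_sub_norm_le r p)
    _ = 2 * dist p r := by ring

section GraphSet

variable {E F : Type*} [NormedAddCommGroup E] [InnerProductSpace ℝ E]
  [NormedAddCommGroup F] [InnerProductSpace ℝ F]

theorem mem_graphSet_iff {A : E →L[ℝ] F} {p : WithLp 2 (E × F)} :
    p ∈ graphSet A ↔ p.snd = A p.fst :=
  Iff.rfl

theorem toLp_mem_graphSet (A : E →L[ℝ] F) (u : E) : toLp 2 (u, A u) ∈ graphSet A :=
  rfl

theorem smul_mem_graphSet {A : E →L[ℝ] F} {p : WithLp 2 (E × F)} (c : ℝ)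
    (hp : p ∈ graphSet A) : c • p ∈ graphSet A := by
  rw [mem_graphSet_iff] at hp ⊢
  simp [hp]

theorem inv_norm_smul_mem_graphSet_inter_sphere {A : E →L[ℝ] F} {p : WithLp 2 (E × F)}
    (hp : p ∈ graphSet A) (hp0 : p ≠ 0) : ‖p‖⁻¹ • p ∈ graphSet A ∩ Metric.sphere 0 1 :=
  ⟨smul_mem_graphSet _ hp, by simpa using norm_smul_inv_norm (𝕜 := ℝ) hp0⟩

omit [InnerProductSpace ℝ E] [InnerProductSpace ℝ F] in
theorem toLp_ne_zero_of_ne_zero {u : E} (hu : u ≠ 0) (v : F) : toLp 2 (u, v) ≠ 0 :=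
  fun h => hu (congrArg (fun p : WithLp 2 (E × F) => p.fst) h)

theorem fst_ne_zero_of_mem_graphSet {A : E →L[ℝ] F} {p : WithLp 2 (E × F)}
    (hp : p ∈ graphSet A) (hp0 : p ≠ 0) : p.fst ≠ 0 := by
  intro h
  apply hp0
  rw [WithLp.ext_iff]
  ext <;> simp [h, mem_graphSet_iff.mp hp]

theorem exists_mem_graphSet_inter_sphere_dist_le (A B : E →L[ℝ] F) {p : WithLp 2 (E × F)}
    (hp : p ∈ graphSet A ∩ Metric.sphere 0 1) :
    ∃ q ∈ graphSet B ∩ Metric.sphere 0 1, dist p q ≤ 2 * ‖A - B‖ := by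
  obtain ⟨hpA, hp1⟩ := hp
  rw [mem_sphere_zero_iff_norm] at hp1
  have hu : p.fst ≠ 0 :=
    fst_ne_zero_of_mem_graphSet hpA (ne_zero_of_norm_ne_zero (by simp [hp1]))
  set r := toLp 2 (p.fst, B p.fst)
  refine ⟨‖r‖⁻¹ • r, inv_norm_smul_mem_graphSet_inter_sphere (toLp_mem_graphSet B _)
    (toLp_ne_zero_of_ne_zero hu _), (dist_inv_norm_smul_le hp1 r).trans ?_⟩
  have hpr : dist p r = ‖(A - B) p.fst‖ := by
    rw [dist_eq_norm, prod_norm_eq_of_L2]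
    simp [r, mem_graphSet_iff.mp hpA]
  calc 2 * dist p r ≤ 2 * (‖A - B‖ * ‖p.fst‖) := by rw [hpr]; gcongr; exact (A - B).le_opNorm _
    _ ≤ 2 * ‖A - B‖ := by
        have := hp1 ▸ WithLp.norm_fst_le _ p
        gcongr
        exact mul_le_of_le_one_right (norm_nonneg _) this

theorem sphereDist_graphSet_le (A B : E →L[ℝ] F) :
    sphereDist (graphSet A) (graphSet B) ≤ 2 * ‖A - B‖ := by
  refine Metric.hausdorffDist_le_of_mem_dist (by positivity)
    (fun p hp => exists_mem_graphSet_inter_sphere_dist_le A B hp) (fun p hp => ?_)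
  obtain ⟨q, hq, hpq⟩ := exists_mem_graphSet_inter_sphere_dist_le B A hp
  exact ⟨q, hq, by rwa [norm_sub_rev] at hpq⟩

theorem norm_sub_apply_fst_le_dist {A B : E →L[ℝ] F} {p q : WithLp 2 (E × F)}
    (hp : p ∈ graphSet A) (hq : q ∈ graphSet B) :
    ‖(A - B) p.fst‖ ≤ (1 + ‖B‖) * dist p q := by
  have hsplit : (A - B) p.fst = (p - q).snd - B (p - q).fst := by
    simp [mem_graphSet_iff.mp hp, mem_graphSet_iff.mp hq]
  rw [hsplit, dist_eq_norm]
  calc ‖(p - q).snd - B (p - q).fst‖ ≤ ‖(p - q).snd‖ + ‖B‖ * ‖(p - q).fst‖ :=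
        (norm_sub_le _ _).trans (by gcongr; exact B.le_opNorm _)
    _ ≤ ‖p - q‖ + ‖B‖ * ‖p - q‖ := by
        gcongr; exacts [WithLp.norm_snd_le _ _, WithLp.norm_fst_le _ _]
    _ = (1 + ‖B‖) * ‖p - q‖ := by ring

theorem norm_sub_le_mul_sphereDist (A B : E →L[ℝ] F) :
    ‖A - B‖ ≤ (1 + ‖A‖) * (1 + ‖B‖) * sphereDist (graphSet A) (graphSet B) := by
  refine ContinuousLinearMap.opNorm_le_bound _
    (mul_nonneg (by positivity) (sphereDist_nonneg _ _)) fun u => ?_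
  rcases eq_or_ne u 0 with rfl | hu
  · simp
  set S := graphSet A ∩ Metric.sphere (0 : WithLp 2 (E × F)) 1
  set T := graphSet B ∩ Metric.sphere (0 : WithLp 2 (E × F)) 1
  set r := toLp 2 (u, A u)
  have hpS : ‖r‖⁻¹ • r ∈ S := inv_norm_smul_mem_graphSet_inter_sphere
    (toLp_mem_graphSet A u) (toLp_ne_zero_of_ne_zero hu _)
  have hT : T.Nonempty := ⟨_, inv_norm_smul_mem_graphSet_inter_sphere
    (toLp_mem_graphSet B u) (toLp_ne_zero_of_ne_zero hu _)⟩
  have hfin : Metric.hausdorffEDist S T ≠ ⊤ :=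
    Metric.hausdorffEDist_ne_top_of_nonempty_of_bounded ⟨_, hpS⟩ hT
      (Metric.isBounded_sphere.subset inter_subset_right)
      (Metric.isBounded_sphere.subset inter_subset_right)
  have hunit : ‖(A - B) (‖r‖⁻¹ • u)‖ ≤ (1 + ‖B‖) * sphereDist (graphSet A) (graphSet B) := by
    refine le_trans ?_ (mul_le_mul_of_nonneg_left
      (Metric.infDist_le_hausdorffDist_of_mem hpS hfin) (by positivity))
    rw [← div_le_iff₀' (by positivity), Metric.le_infDist hT]
    intro q hq
    rw [div_le_iff₀' (by positivity)]
    exact norm_sub_apply_fst_le_dist (smul_mem_graphSet _ (toLp_mem_graphSet A u)) hq.1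
  have hr : ‖r‖ ≤ (1 + ‖A‖) * ‖u‖ :=
    (prod_norm_toLp_le_add u (A u)).trans (by linarith [A.le_opNorm u])
  have hr0 : 0 < ‖r‖ := norm_pos_iff.mpr (toLp_ne_zero_of_ne_zero hu _)
  calc ‖(A - B) u‖ = ‖r‖ * ‖(A - B) (‖r‖⁻¹ • u)‖ := by
        rw [map_smul, norm_smul, Real.norm_eq_abs, abs_inv, abs_norm,
          mul_inv_cancel_left₀ hr0.ne']
    _ ≤ (1 + ‖A‖) * ‖u‖ * ((1 + ‖B‖) * sphereDist (graphSet A) (graphSet B)) := by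
        gcongr
    _ = (1 + ‖A‖) * (1 + ‖B‖) * sphereDist (graphSet A) (graphSet B) * ‖u‖ := by ring

end GraphSet

theorem Convex.norm_toLp_graph_sub_le {E F : Type*} [NormedAddCommGroup E] [NormedSpace ℝ E]
    [NormedAddCommGroup F] [NormedSpace ℝ F] {B : Set E} (hB : Convex ℝ B) {f : E → F}
    {f' : E → E →L[ℝ] F} {C : ℝ} (hf : ∀ z ∈ B, HasFDerivWithinAt f (f' z) B z)
    (hbound : ∀ z ∈ B, ‖f' z‖ ≤ C) {z w : E} (hz : z ∈ B) (hw : w ∈ B) :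
    ‖toLp 2 (z, f z) - toLp 2 (w, f w)‖ ≤ (1 + C) * ‖z - w‖ := by
  rw [← toLp_sub, Prod.mk_sub_mk]
  calc ‖toLp 2 (z - w, f z - f w)‖ ≤ ‖z - w‖ + ‖f z - f w‖ := prod_norm_toLp_le_add _ _
    _ ≤ ‖z - w‖ + C * ‖z - w‖ := by
        gcongr; exact hB.norm_image_sub_le_of_norm_hasFDerivWithin_le hf hbound hw hz
    _ = (1 + C) * ‖z - w‖ := by ring

theorem gauss_lipschitz_iff_deriv_lipschitz_general {E F : Type*}
    [NormedAddCommGroup E] [InnerProductSpace ℝ E]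
    [NormedAddCommGroup F] [InnerProductSpace ℝ F]
    (B : Set E) (hBconv : Convex ℝ B)
    (lam : ℝ) (hlam : 1 ≤ lam)
    (f : E → F) (f' : E → E →L[ℝ] F)
    (hderiv : ∀ z ∈ B, HasFDerivWithinAt f (f' z) B z)
    (hbound : ∀ z ∈ B, ‖f' z‖ ≤ lam) :
    (∃ K > (0 : ℝ), ∀ z ∈ B, ∀ w ∈ B,
        sphereDist (graphSet (f' z)) (graphSet (f' w)) ≤
          K * ‖(WithLp.equiv 2 (E × F)).symm (z, f z) -
                (WithLp.equiv 2 (E × F)).symm (w, f w)‖) ↔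
      (∃ L > (0 : ℝ), ∀ z ∈ B, ∀ w ∈ B, ‖f' z - f' w‖ ≤ L * ‖z - w‖) := by
  simp only [WithLp.equiv_symm_apply]
  constructor
  · rintro ⟨K, hK, hgauss⟩
    refine ⟨(1 + lam) ^ 2 * K * (1 + lam), by positivity, fun z hz w hw => ?_⟩
    have hnorms : (1 + ‖f' z‖) * (1 + ‖f' w‖) ≤ (1 + lam) ^ 2 := by
      rw [sq]; gcongr <;> linarith [hbound z hz, hbound w hw, norm_nonneg (f' w)]
    calc ‖f' z - f' w‖
        ≤ (1 + ‖f' z‖) * (1 + ‖f' w‖) * sphereDist (graphSet (f' z)) (graphSet (f' w)) :=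
          norm_sub_le_mul_sphereDist _ _
      _ ≤ (1 + lam) ^ 2 * (K * ((1 + lam) * ‖z - w‖)) := by
          gcongr
          · exact sphereDist_nonneg _ _
          · exact (hgauss z hz w hw).trans (by
              gcongr; exact hBconv.norm_toLp_graph_sub_le hderiv hbound hz hw)
      _ = (1 + lam) ^ 2 * K * (1 + lam) * ‖z - w‖ := by ring
  · rintro ⟨L, hL, hderivLip⟩
    refine ⟨2 * L, by positivity, fun z hz w hw => ?_⟩
    calc sphereDist (graphSet (f' z)) (graphSet (f' w)) ≤ 2 * ‖f' z - f' w‖ :=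
          sphereDist_graphSet_le _ _
      _ ≤ 2 * (L * ‖z - w‖) := by gcongr; exact hderivLip z hz w hw
      _ ≤ 2 * L * ‖toLp 2 (z, f z) - toLp 2 (w, f w)‖ := by
          rw [← mul_assoc]
          gcongr
          exact WithLp.norm_fst_le (x := toLp 2 (z, f z) - toLp 2 (w, f w))

/-- **Graph case (k = 0) of Theorem 3.1 of the paper.** For a differentiable map `f` on an
open convex set `B` with uniformly bounded derivative, the Gauss map of the graph of `f`
is Lipschitz (with respect to the Grassmannian distance `δ` and the Euclidean product norm
on `E × F`) if and only if `Df` is Lipschitz. -/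
theorem gauss_lipschitz_iff_deriv_lipschitz {E F : Type*}
    [NormedAddCommGroup E] [InnerProductSpace ℝ E]
    [NormedAddCommGroup F] [InnerProductSpace ℝ F]
    [FiniteDimensional ℝ E] [FiniteDimensional ℝ F]
    (B : Set E) (hB : IsOpen B) (hBconv : Convex ℝ B)
    (lam : ℝ) (hlam : 1 ≤ lam)
    (f : E → F) (f' : E → E →L[ℝ] F)
    (hderiv : ∀ z ∈ B, HasFDerivWithinAt f (f' z) B z)
    (hbound : ∀ z ∈ B, ‖f' z‖ ≤ lam) :
    (∃ K > (0 : ℝ), ∀ z ∈ B, ∀ w ∈ B,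
        sphereDist (graphSet (f' z)) (graphSet (f' w)) ≤
          K * ‖(WithLp.equiv 2 (E × F)).symm (z, f z) -
                (WithLp.equiv 2 (E × F)).symm (w, f w)‖) ↔
      (∃ L > (0 : ℝ), ∀ z ∈ B, ∀ w ∈ B, ‖f' z - f' w‖ ≤ L * ‖z - w‖) :=
  gauss_lipschitz_iff_deriv_lipschitz_general B hBconv lam hlam f f' hderiv hbound
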